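/- arXiv:1607.03777 — 2 statements merged into one kernel-verified Lean document; each statement's English description precedes it below -/
import Mathlib

section
/- Let K be a quadrilateral element and e an edge of K. For any polynomial φ of degree at most k in each variable on K, the squared L² norm of φ restricted to e is bounded by (k+1)²·(|e|/|K|) times the squared L² norm of φ on K. -/
/-!
On `[0, 1]` the shifted Legendre polynomials `Pₙ`, given by Rodrigues' formula
`n! Pₙ = Dⁿ (xⁿ (1 - x)ⁿ)`, are orthogonal with `‖Pₙ‖² = 1 / (2n + 1)` (repeated integration by
parts and a Beta integral) and `Pₙ(0) = 1`. Since `P₀, …, P_k` span the polynomials of degree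
`≤ k`, the kernel `G = ∑_{i ≤ k} (2i + 1) Pᵢ` reproduces `p ↦ p(0)` on them, and
`‖G‖² = G(0) = (k + 1)²`; Cauchy–Schwarz gives `p(0)² ≤ (k + 1)² ‖p‖²`. Reflecting and rescaling
`[0, a]` onto `[0, 1]` yields `p(a)² ≤ (k + 1)² / a · ∫₀ᵃ p²`, which is applied to
`x ↦ P(x, y)` for each `y` and integrated over `y ∈ (0, b)` by Fubini, with
`|e| / |K| = 1 / a`.
-/

open MeasureTheory Set
open scoped Nat

namespace Polynomial

noncomputable def l2Inner (a b : ℝ) : ℝ[X] →ₗ[ℝ] ℝ[X] →ₗ[ℝ] ℝ :=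
  (LinearMap.mul ℝ ℝ[X]).compr₂
    { toFun := fun p => ∫ x in a..b, p.eval x
      map_add' := fun p q => by
        simpa only [eval_add] using intervalIntegral.integral_add
          (p.continuous.intervalIntegrable a b) (q.continuous.intervalIntegrable a b)
      map_smul' := fun c p => by simp [intervalIntegral.integral_const_mul] }

@[simp]
lemma l2Inner_apply (a b : ℝ) (p q : ℝ[X]) :
    l2Inner a b p q = ∫ x in a..b, p.eval x * q.eval x := by
  simp [l2Inner]

lemma l2Inner_comm (a b : ℝ) (p q : ℝ[X]) : l2Inner a b p q = l2Inner a b q p := by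
  simp only [l2Inner_apply, mul_comm]

lemma l2Inner_self_nonneg {a b : ℝ} (hab : a ≤ b) (p : ℝ[X]) : 0 ≤ l2Inner a b p p := by
  rw [l2Inner_apply]
  exact intervalIntegral.integral_nonneg hab fun x _ => mul_self_nonneg _

lemma l2Inner_derivative_left (a b : ℝ) (p q : ℝ[X]) :
    l2Inner a b (derivative p) q =
      (p * q).eval b - (p * q).eval a - l2Inner a b p (derivative q) := by
  have := intervalIntegral.integral_mul_deriv_eq_deriv_mul (fun x _ => p.hasDerivAt x)
    (fun x _ => q.hasDerivAt x) ((derivative p).continuous.intervalIntegrable a b)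
    ((derivative q).continuous.intervalIntegrable a b)
  simp only [l2Inner_apply, eval_mul]
  linarith

lemma l2Inner_iterate_derivative_left_of_dvd {a b : ℝ} {n : ℕ} {w : ℝ[X]}
    (ha : (X - C a) ^ n ∣ w) (hb : (X - C b) ^ n ∣ w) (q : ℝ[X]) :
    l2Inner a b (derivative^[n] w) q = (-1) ^ n * l2Inner a b w (derivative^[n] q) := by
  induction n generalizing w with
  | zero => simp
  | succ n ih =>
    have hwa : w.eval a = 0 := dvd_iff_isRoot.mp ((dvd_pow_self _ n.succ_ne_zero).trans ha)
    have hwb : w.eval b = 0 := dvd_iff_isRoot.mp ((dvd_pow_self _ n.succ_ne_zero).trans hb)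
    have hda : (X - C a) ^ n ∣ derivative w := by
      simpa using pow_sub_one_dvd_derivative_of_pow_dvd ha
    have hdb : (X - C b) ^ n ∣ derivative w := by
      simpa using pow_sub_one_dvd_derivative_of_pow_dvd hb
    rw [Function.iterate_succ_apply, ih hda hdb, l2Inner_derivative_left, eval_mul, eval_mul, hwa,
      hwb, ← Function.iterate_succ_apply' derivative]
    ring

lemma iterate_derivative_natDegree {R : Type*} [Semiring R] (p : R[X]) :
    derivative^[p.natDegree] p = C ((p.natDegree ! : R) * p.leadingCoeff) := by
  have hdeg : (derivative^[p.natDegree] p).natDegree = 0 := by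
    have := natDegree_iterate_derivative p p.natDegree
    omega
  rw [eq_C_of_natDegree_eq_zero hdeg, coeff_iterate_derivative, zero_add, Nat.descFactorial_self,
    nsmul_eq_mul]
  rfl

end Polynomial

lemma integral_pow_mul_one_sub_pow (a b : ℕ) :
    ∫ x in (0:ℝ)..1, x ^ a * (1 - x) ^ b = (a ! * b ! / (a + b + 1)! : ℝ) := by
  have h := Complex.betaIntegral_eq_Gamma_mul_div (a + 1) (b + 1)
    (by simp; positivity) (by simp; positivity)
  rw [Complex.betaIntegral,
    show ((a : ℂ) + 1 + (b + 1)) = ((a + b + 1 : ℕ) : ℂ) + 1 by push_cast; ring,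
    Complex.Gamma_nat_eq_factorial, Complex.Gamma_nat_eq_factorial,
    Complex.Gamma_nat_eq_factorial] at h
  have hcast : ∀ x : ℝ, (x : ℂ) ^ ((a + 1 : ℂ) - 1) * (1 - (x : ℂ)) ^ ((b + 1 : ℂ) - 1) =
      ((x ^ a * (1 - x) ^ b : ℝ) : ℂ) := fun x => by
    push_cast
    simp [Complex.cpow_natCast]
  simp only [hcast, intervalIntegral.integral_ofReal] at h
  exact Complex.ofReal_injective (by push_cast; exact h)

namespace Polynomial

noncomputable def shiftedLegendreℝ : Sequence ℝ where
  elems' n := (shiftedLegendre n).map (Int.castRingHom ℝ)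
  degree_eq' n := by rw [degree_map_eq_of_injective Int.cast_injective, degree_shiftedLegendre]

lemma shiftedLegendreℝ_apply (n : ℕ) :
    shiftedLegendreℝ n = (shiftedLegendre n).map (Int.castRingHom ℝ) := rfl

lemma factorial_mul_shiftedLegendreℝ (n : ℕ) :
    (n ! : ℝ[X]) * shiftedLegendreℝ n = derivative^[n] (X ^ n * (1 - X) ^ n) := by
  rw [shiftedLegendreℝ_apply, ← Polynomial.map_natCast (Int.castRingHom ℝ),
    ← Polynomial.map_mul, factorial_mul_shiftedLegendre_eq, ← iterate_derivative_map]
  simp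

lemma eval_zero_shiftedLegendreℝ (n : ℕ) : (shiftedLegendreℝ n).eval 0 = 1 := by
  simp [← coeff_zero_eq_eval_zero, shiftedLegendreℝ_apply, coeff_shiftedLegendre]

lemma leadingCoeff_shiftedLegendreℝ (n : ℕ) :
    (shiftedLegendreℝ n).leadingCoeff = (-1) ^ n * (n + n).choose n := by
  rw [leadingCoeff, shiftedLegendreℝ.natDegree_eq, shiftedLegendreℝ_apply, coeff_map,
    coeff_shiftedLegendre]
  simp

lemma factorial_mul_l2Inner_shiftedLegendreℝ (n : ℕ) (q : ℝ[X]) :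
    (n ! : ℝ) * l2Inner 0 1 (shiftedLegendreℝ n) q =
      (-1) ^ n * l2Inner 0 1 (X ^ n * (1 - X) ^ n) (derivative^[n] q) := by
  rw [← smul_eq_mul, ← LinearMap.map_smul₂, ← l2Inner_iterate_derivative_left_of_dvd,
    Nat.cast_smul_eq_nsmul, nsmul_eq_mul, factorial_mul_shiftedLegendreℝ]
  · simp [dvd_mul_right]
  · exact dvd_mul_of_dvd_right (pow_dvd_pow_of_dvd ⟨-1, by simp⟩ n) _

lemma l2Inner_shiftedLegendreℝ_of_natDegree_lt {n : ℕ} {q : ℝ[X]} (hq : q.natDegree < n) :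
    l2Inner 0 1 (shiftedLegendreℝ n) q = 0 := by
  have h := factorial_mul_l2Inner_shiftedLegendreℝ n q
  rw [iterate_derivative_eq_zero hq, map_zero, mul_zero] at h
  exact (mul_eq_zero.mp h).resolve_left (by positivity)

lemma l2Inner_shiftedLegendreℝ_self (n : ℕ) :
    l2Inner 0 1 (shiftedLegendreℝ n) (shiftedLegendreℝ n) = (2 * n + 1 : ℝ)⁻¹ := by
  have hD : derivative^[n] (shiftedLegendreℝ n) =
      C ((n ! : ℝ) * ((-1) ^ n * (n + n).choose n)) := by
    simpa [leadingCoeff_shiftedLegendreℝ] using iterate_derivative_natDegree (shiftedLegendreℝ n)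
  have h := factorial_mul_l2Inner_shiftedLegendreℝ n (shiftedLegendreℝ n)
  simp only [hD, l2Inner_apply, eval_C, eval_mul, eval_pow, eval_sub, eval_one, eval_X,
    intervalIntegral.integral_mul_const, integral_pow_mul_one_sub_pow] at h ⊢
  have hfact : ((n + n + 1)! : ℝ) = (2 * n + 1) * ((n + n).choose n * n ! * n !) := by
    rw [Nat.factorial_succ, ← Nat.add_choose_mul_factorial_mul_factorial]
    push_cast
    ring
  have hchoose : ((n + n).choose n : ℝ) ≠ 0 :=
    Nat.cast_ne_zero.mpr (Nat.choose_pos (Nat.le_add_left n n)).ne'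
  refine mul_left_cancel₀ (Nat.cast_ne_zero.mpr n.factorial_ne_zero) (h.trans ?_)
  rw [hfact]
  field_simp
  rw [← pow_mul, pow_mul', neg_one_sq, one_pow]

lemma l2Inner_shiftedLegendreℝ_of_ne {i j : ℕ} (h : i ≠ j) :
    l2Inner 0 1 (shiftedLegendreℝ i) (shiftedLegendreℝ j) = 0 := by
  rcases h.lt_or_gt with h | h
  · rw [l2Inner_comm]
    exact l2Inner_shiftedLegendreℝ_of_natDegree_lt ((shiftedLegendreℝ.natDegree_eq i).trans_lt h)
  · exact l2Inner_shiftedLegendreℝ_of_natDegree_lt ((shiftedLegendreℝ.natDegree_eq j).trans_lt h)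

noncomputable def legendreKernel (k : ℕ) : ℝ[X] :=
  ∑ i ∈ Finset.range (k + 1), (2 * i + 1 : ℝ) • shiftedLegendreℝ i

lemma natDegree_legendreKernel_le (k : ℕ) : (legendreKernel k).natDegree ≤ k :=
  natDegree_sum_le_of_forall_le _ _ fun i hi => (natDegree_smul_le _ _).trans
    ((shiftedLegendreℝ.natDegree_eq i).trans_le (Nat.lt_succ_iff.mp (Finset.mem_range.mp hi)))

lemma eval_zero_legendreKernel (k : ℕ) : (legendreKernel k).eval 0 = (k + 1) ^ 2 := by
  simp only [legendreKernel, eval_finsetSum, eval_smul, eval_zero_shiftedLegendreℝ, smul_eq_mul,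
    mul_one]
  induction k with
  | zero => simp
  | succ k ih =>
    rw [Finset.sum_range_succ, ih]
    push_cast
    ring

lemma l2Inner_shiftedLegendreℝ_legendreKernel {i k : ℕ} (hi : i ≤ k) :
    l2Inner 0 1 (shiftedLegendreℝ i) (legendreKernel k) = 1 := by
  rw [legendreKernel, map_sum, Finset.sum_eq_single i]
  · rw [map_smul, smul_eq_mul, l2Inner_shiftedLegendreℝ_self]
    field_simp
  · intro j _ hji
    rw [map_smul, l2Inner_shiftedLegendreℝ_of_ne hji.symm, smul_zero]
  · intro h
    exact absurd (Finset.mem_range.mpr (Nat.lt_succ_of_le hi)) h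

lemma l2Inner_legendreKernel {k : ℕ} {p : ℝ[X]} (hp : p.natDegree ≤ k) :
    l2Inner 0 1 p (legendreKernel k) = p.eval 0 := by
  have hp : p ∈ Submodule.span ℝ (shiftedLegendreℝ '' Set.Iic k) := by
    rw [shiftedLegendreℝ.span_degreeLE fun i _ =>
      (leadingCoeff_ne_zero.mpr (shiftedLegendreℝ.ne_zero i)).isUnit, mem_degreeLE]
    exact degree_le_of_natDegree_le hp
  have hker : Submodule.span ℝ (shiftedLegendreℝ '' Set.Iic k) ≤
      LinearMap.ker ((l2Inner 0 1).flip (legendreKernel k) - leval 0) := by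
    rw [Submodule.span_le]
    rintro _ ⟨i, hi, rfl⟩
    simp only [SetLike.mem_coe, LinearMap.mem_ker, LinearMap.sub_apply, LinearMap.flip_apply,
      leval_apply, l2Inner_shiftedLegendreℝ_legendreKernel hi, eval_zero_shiftedLegendreℝ,
      sub_self]
  simpa [sub_eq_zero] using hker hp

lemma sq_eval_zero_le_mul_l2Inner {k : ℕ} {p : ℝ[X]} (hp : p.natDegree ≤ k) :
    p.eval 0 ^ 2 ≤ (k + 1) ^ 2 * l2Inner 0 1 p p := by
  set K := legendreKernel k
  set s : ℝ := (k + 1) ^ 2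
  have hKK : l2Inner 0 1 K K = s := by
    rw [l2Inner_legendreKernel (natDegree_legendreKernel_le k), eval_zero_legendreKernel]
  have hpK : l2Inner 0 1 p K = p.eval 0 := l2Inner_legendreKernel hp
  have hKp : l2Inner 0 1 K p = p.eval 0 := by rw [l2Inner_comm, hpK]
  -- Cauchy–Schwarz against `K`, in the form `0 ≤ ‖s • p - p(0) • K‖²` where `s = ‖K‖²`
  have h := l2Inner_self_nonneg zero_le_one (s • p - p.eval 0 • K)
  simp only [map_sub, map_smul, LinearMap.sub_apply, LinearMap.smul_apply, smul_eq_mul, hKK, hpK,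
    hKp] at h
  have : 0 ≤ s * (s * l2Inner 0 1 p p - p.eval 0 ^ 2) := by linear_combination h
  linarith [nonneg_of_mul_nonneg_right this (by positivity)]

lemma sq_eval_le_div_mul_integral {a : ℝ} (ha : 0 < a) {k : ℕ} {p : ℝ[X]}
    (hp : p.natDegree ≤ k) :
    p.eval a ^ 2 ≤ (k + 1) ^ 2 / a * ∫ x in 0..a, p.eval x ^ 2 := by
  -- `x ↦ a - a x` sends the endpoint `0`, where every `Pₙ` equals `1`, to `a`
  set q := p.comp (C a - C a * X)
  have hq : q.natDegree ≤ k := by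
    refine natDegree_comp_le.trans ?_
    have : (C a - C a * X).natDegree ≤ 1 := by compute_degree
    nlinarith
  have hint : ∫ x in (0:ℝ)..1, p.eval (a - a * x) ^ 2 = a⁻¹ * ∫ x in 0..a, p.eval x ^ 2 := by
    simpa using intervalIntegral.integral_comp_sub_mul (fun x => p.eval x ^ 2) ha.ne' a
      (a := 0) (b := 1)
  have h := sq_eval_zero_le_mul_l2Inner hq
  simp only [l2Inner_apply, ← sq, q, eval_comp, eval_sub, eval_mul, eval_C, eval_X, mul_zero,
    sub_zero, hint] at h
  rwa [div_eq_mul_inv, mul_assoc]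

end Polynomial

lemma Continuous.integrable_prod_restrict_Ioo {E : Type*} [NormedAddCommGroup E]
    {F : ℝ × ℝ → E} (hF : Continuous F) (a b c d : ℝ) :
    Integrable F ((volume.restrict (Ioo a b)).prod (volume.restrict (Ioo c d))) := by
  rw [Measure.prod_restrict, ← Measure.volume_eq_prod]
  exact (hF.continuousOn.integrableOn_compact (isCompact_Icc.prod isCompact_Icc)).mono_set
    (prod_mono Ioo_subset_Icc_self Ioo_subset_Icc_self)

namespace MvPolynomial

lemma sq_eval_le_div_mul_setIntegral {a : ℝ} (ha : 0 < a) {k : ℕ} {P : MvPolynomial (Fin 2) ℝ}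
    (hP : P.degreeOf 0 ≤ k) (y : ℝ) :
    eval ![a, y] P ^ 2 ≤ (k + 1) ^ 2 / a * ∫ x in Ioo 0 a, eval ![x, y] P ^ 2 := by
  have h := Polynomial.sq_eval_le_div_mul_integral ha
    (p := (finSuccEquiv ℝ 1 P).map (eval ![y]))
    (Polynomial.natDegree_map_le.trans ((natDegree_finSuccEquiv P).trans_le hP))
  simp only [← eval_eq_eval_mv_eval'] at h
  rwa [intervalIntegral.integral_of_le ha.le, integral_Ioc_eq_integral_Ioo] at h

end MvPolynomial

/-- Discrete trace inequality on an axis-aligned rectangle `K = (0,a) × (0,b)`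
with edge `e = {a} × (0,b)` (so `|e| = b` and `|K| = a*b`): for any real
polynomial `P` of degree at most `k` in each of the two variables,
`‖P‖²_{L²(e)} ≤ (k+1)² (|e|/|K|) ‖P‖²_{L²(K)}`. -/
theorem discrete_trace_inequality
    (a b : ℝ) (ha : 0 < a) (hb : 0 < b) (k : ℕ)
    (P : MvPolynomial (Fin 2) ℝ)
    (hdeg : ∀ i : Fin 2, P.degreeOf i ≤ k) :
    (∫ y in Set.Ioo (0:ℝ) b, (MvPolynomial.eval ![a, y] P) ^ 2) ≤
      ((k : ℝ) + 1) ^ 2 * (b / (a * b)) *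
        ∫ x in Set.Ioo (0:ℝ) a, ∫ y in Set.Ioo (0:ℝ) b,
          (MvPolynomial.eval ![x, y] P) ^ 2 := by
  have hF : Integrable (fun z : ℝ × ℝ => MvPolynomial.eval ![z.1, z.2] P ^ 2)
      ((volume.restrict (Ioo 0 a)).prod (volume.restrict (Ioo 0 b))) :=
    (((MvPolynomial.continuous_eval P).comp (by fun_prop)).pow 2).integrable_prod_restrict_Ioo
      0 a 0 b
  calc ∫ y in Ioo 0 b, MvPolynomial.eval ![a, y] P ^ 2
      ≤ ∫ y in Ioo 0 b, (k + 1) ^ 2 / a * ∫ x in Ioo 0 a, MvPolynomial.eval ![x, y] P ^ 2 :=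
        integral_mono_of_nonneg (ae_of_all _ fun _ => sq_nonneg _)
          (hF.integral_prod_right.const_mul _)
          (ae_of_all _ (MvPolynomial.sq_eval_le_div_mul_setIntegral ha (hdeg 0)))
    _ = _ := by
        rw [integral_const_mul, ← integral_integral_swap hF]
        field_simp
end

section
/- On the reference interval [-1,1], any polynomial p of degree at most k satisfies p(1)² ≤ ((k+1)²/2) · ∫_{-1}^{1} p(x)² dx. -/
open Polynomial intervalIntegral

namespace TraceIneq1D

noncomputable def I (p : Polynomial ℝ) : ℝ := ∫ x in (-1:ℝ)..1, p.eval x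

lemma intble (p : Polynomial ℝ) : IntervalIntegrable (fun x => p.eval x) MeasureTheory.volume (-1:ℝ) 1 :=
  (p.continuous_aeval).intervalIntegrable _ _

lemma I_add (p q : Polynomial ℝ) : I (p + q) = I p + I q := by
  simp only [I, eval_add]
  exact integral_add (intble p) (intble q)

lemma I_C_mul (a : ℝ) (p : Polynomial ℝ) : I (C a * p) = a * I p := by
  simp only [I, eval_mul, eval_C]
  exact integral_const_mul a _

lemma ibp (g q : Polynomial ℝ) :
    I (derivative g * q) = g.eval 1 * q.eval 1 - g.eval (-1) * q.eval (-1) - I (g * derivative q) := by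
  have h := integral_mul_deriv_eq_deriv_mul (a := (-1:ℝ)) (b := (1:ℝ))
    (u := fun x => g.eval x) (v := fun x => q.eval x)
    (u' := fun x => (derivative g).eval x) (v' := fun x => (derivative q).eval x)
    (fun x _ => g.hasDerivAt x) (fun x _ => q.hasDerivAt x)
    (intble _) (intble _)
  have h2 : I (g * derivative q) = g.eval 1 * q.eval 1 - g.eval (-1) * q.eval (-1) - I (derivative g * q) := by
    simpa only [I, eval_mul] using h
  rw [h2]; ring

lemma deriv_factor (a : ℝ) (g : Polynomial ℝ) (n : ℕ) :
    ∀ m ≤ n, ∃ h : Polynomial ℝ, derivative^[m] ((X - C a) ^ n * g) =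
      C (n.descFactorial m : ℝ) * ((X - C a) ^ (n - m) * g) + (X - C a) ^ (n - m + 1) * h := by
  intro m hm
  induction m with
  | zero => exact ⟨0, by simp⟩
  | succ m ih =>
    obtain ⟨h, hh⟩ := ih (le_of_lt (Nat.lt_of_succ_le hm))
    refine ⟨C (n.descFactorial m : ℝ) * derivative g + C ((n - m : ℕ) + 1 : ℝ) * h
      + (X - C a) * derivative h, ?_⟩
    have hnm : n - m = (n - (m + 1)) + 1 := by omega
    rw [Function.iterate_succ_apply', hh]
    have hdF : (n.descFactorial (m+1) : ℝ) = (n - m : ℕ) * n.descFactorial m := by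
      rw [Nat.descFactorial_succ]; push_cast; ring
    simp only [derivative_add, derivative_mul, derivative_C, derivative_pow, derivative_X_sub_C,
      zero_mul, zero_add, mul_one]
    rw [hdF, hnm]
    push_cast
    simp only [map_add, map_mul, map_one]
    ring

noncomputable def f (n : ℕ) : Polynomial ℝ := (X ^ 2 - C 1) ^ n
noncomputable def R (n : ℕ) : Polynomial ℝ := derivative^[n] (f n)

lemma f_eq_one (n : ℕ) : f n = (X - C 1) ^ n * (X + C 1) ^ n := by
  rw [f, ← mul_pow]; norm_num; ring_nf
lemma f_eq_neg (n : ℕ) : f n = (X - C (-1)) ^ n * (X - C 1) ^ n := by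
  rw [f, ← mul_pow]; norm_num; ring_nf

lemma eval_one_R (n : ℕ) : (R n).eval 1 = 2 ^ n * n.factorial := by
  obtain ⟨h, hh⟩ := deriv_factor 1 ((X + C 1) ^ n) n n le_rfl
  rw [R, f_eq_one, hh]
  simp [Nat.descFactorial_self]; ring

lemma vanish {m n : ℕ} (hmn : m < n) (x : ℝ) (hx : x = 1 ∨ x = -1) :
    (derivative^[m] (f n)).eval x = 0 := by
  rcases hx with rfl | rfl
  · obtain ⟨h, hh⟩ := deriv_factor 1 ((X + C 1) ^ n) n m hmn.le
    rw [f_eq_one, hh]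
    have : n - m ≠ 0 := by omega
    simp [zero_pow this]
  · obtain ⟨h, hh⟩ := deriv_factor (-1) ((X - C 1) ^ n) n m hmn.le
    rw [f_eq_neg, hh]
    have : n - m ≠ 0 := by omega
    simp [zero_pow this]

lemma coeff_iter_deriv (q : Polynomial ℝ) (j m : ℕ) :
    (derivative^[j] q).coeff m = q.coeff (m + j) * ((m + j).descFactorial j : ℝ) := by
  induction j generalizing m with
  | zero => simp
  | succ j ih =>
    rw [Function.iterate_succ_apply', coeff_derivative, ih]
    have : m + 1 + j = m + (j + 1) := by omega
    rw [this, Nat.descFactorial_succ]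
    have h2 : m + (j + 1) - j = m + 1 := by omega
    rw [h2]; push_cast; ring

lemma natDegree_f (n : ℕ) : (f n).natDegree = 2 * n := by
  rw [f]
  have : (X ^ 2 - C 1 : Polynomial ℝ).Monic := by
    simpa using monic_X_pow_sub_C (1:ℝ) (n := 2) (by norm_num)
  rw [natDegree_pow]
  have h2 : (X ^ 2 - C (1:ℝ)).natDegree = 2 := by
    simpa using natDegree_X_pow_sub_C (n := 2) (r := (1:ℝ))
  rw [h2]; ring

lemma natDegree_iter_deriv (q : Polynomial ℝ) (j : ℕ) :
    (derivative^[j] q).natDegree ≤ q.natDegree - j := by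
  induction j with
  | zero => simp
  | succ j ih =>
    rw [Function.iterate_succ_apply']
    refine (natDegree_derivative_le _).trans ?_
    omega

lemma natDegree_R (n : ℕ) : (R n).natDegree ≤ n := by
  have := natDegree_iter_deriv (f n) n
  rw [natDegree_f] at this
  rw [R]; omega

lemma coeff_f (n : ℕ) : (f n).coeff (2 * n) = 1 := by
  have : (X ^ 2 - C 1 : Polynomial ℝ).Monic := by
    simpa using monic_X_pow_sub_C (1:ℝ) (n := 2) (by norm_num)
  have h := this.pow (n := n)
  have := h.coeff_natDegree
  rwa [← f, natDegree_f] at this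

lemma coeff_R (n : ℕ) : (R n).coeff n = ((2 * n).descFactorial n : ℝ) := by
  rw [R, coeff_iter_deriv]
  have : n + n = 2 * n := by omega
  rw [this, coeff_f, one_mul]

lemma coeff_R_ne (n : ℕ) : (R n).coeff n ≠ 0 := by
  rw [coeff_R]
  have : (2 * n).descFactorial n ≠ 0 := by
    rw [Ne, Nat.descFactorial_eq_zero_iff_lt]; omega
  exact_mod_cast this

lemma I_zero : I 0 = 0 := by simp [I]

lemma iter_ibp (n : ℕ) (q : Polynomial ℝ) :
    ∀ j ≤ n, I (R n * q) = (-1:ℝ)^j * I (derivative^[n-j] (f n) * derivative^[j] q) := by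
  intro j hj
  induction j with
  | zero => simp [R]
  | succ j ih =>
    rw [ih (by omega)]
    have h1 : n - j = (n - (j+1)) + 1 := by omega
    have h2 : derivative^[n-j] (f n) = derivative (derivative^[n-(j+1)] (f n)) := by
      rw [h1, Function.iterate_succ_apply']
    rw [h2, ibp]
    rw [vanish (by omega) 1 (Or.inl rfl), vanish (by omega) (-1) (Or.inr rfl)]
    rw [← Function.iterate_succ_apply' derivative j q]
    ring

lemma orth_lt {n : ℕ} {q : Polynomial ℝ} (h : q.natDegree < n) : I (R n * q) = 0 := by
  rw [iter_ibp n q n le_rfl, Nat.sub_self, Function.iterate_zero_apply,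
    iterate_derivative_eq_zero h, mul_zero, I_zero, mul_zero]

lemma orth {m n : ℕ} (h : m ≠ n) : I (R m * R n) = 0 := by
  rcases Nat.lt_or_ge m n with hlt | hge
  · rw [mul_comm]; exact orth_lt (lt_of_le_of_lt (natDegree_R m) hlt)
  · exact orth_lt (lt_of_le_of_lt (natDegree_R n) (by omega))

noncomputable def J (n : ℕ) : ℝ := I (f n)

lemma iter_deriv_2n (n : ℕ) : derivative^[2*n] (f n) = C (((2*n).factorial : ℝ)) := by
  have hd : (derivative^[2*n] (f n)).natDegree ≤ 0 := by
    have := natDegree_iter_deriv (f n) (2*n); rw [natDegree_f] at this; omega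
  rw [Polynomial.eq_C_of_natDegree_le_zero hd, coeff_iter_deriv, zero_add, coeff_f, one_mul,
    Nat.descFactorial_self]

lemma norm_R (n : ℕ) : I (R n * R n) = (-1:ℝ)^n * ((2*n).factorial : ℝ) * J n := by
  rw [iter_ibp n (R n) n le_rfl, Nat.sub_self, Function.iterate_zero_apply]
  have : derivative^[n] (R n) = derivative^[2*n] (f n) := by
    rw [R, ← Function.iterate_add_apply]; congr 1; omega
  rw [this, iter_deriv_2n, mul_comm (f n), I_C_mul, J]
  ring

lemma deriv_f_succ (n : ℕ) : derivative (f (n+1)) = C (2*(n:ℝ)+2) * (X * f n) := by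
  rw [f, derivative_pow, f]
  simp only [derivative_sub, derivative_X_pow, derivative_C, sub_zero]
  push_cast
  simp only [map_add, map_mul, map_one, map_ofNat]
  ring

lemma eval_f_one (n : ℕ) : (f (n+1)).eval 1 = 0 := by simp [f, zero_pow]
lemma eval_f_negone (n : ℕ) : (f (n+1)).eval (-1) = 0 := by simp [f, zero_pow]

lemma f_succ (n : ℕ) : (X^2 - C 1) * f n = f (n+1) := by rw [f, f, pow_succ]; ring

lemma J_rec (n : ℕ) : (2*(n:ℝ)+3) * J (n+1) = -(2*(n:ℝ)+2) * J n := by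
  have h := ibp (f (n+1)) X
  rw [deriv_f_succ, eval_f_one, eval_f_negone, derivative_X, mul_one] at h
  have hL : C (2*(n:ℝ)+2) * (X * f n) * X = C (2*(n:ℝ)+2) * (f (n+1) + f n) := by
    rw [← f_succ]; simp only [C_1]; ring
  rw [hL, I_C_mul, I_add] at h
  simp only [zero_mul, sub_zero, zero_sub] at h
  have : J (n+1) + (2*(n:ℝ)+2) * (J (n+1) + J n) = 0 := by
    rw [J, J]; linarith [h]
  linarith

lemma J_zero : J 0 = 2 := by
  simp [J, f, I]; norm_num

lemma J_closed (n : ℕ) : J n = (-1:ℝ)^n * 2^(2*n+1) * (n.factorial:ℝ)^2 / ((2*n+1).factorial : ℝ) := by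
  induction n with
  | zero => simpa using J_zero
  | succ n ih =>
    have hrec := J_rec n
    have h3 : (2*(n:ℝ)+3) ≠ 0 := by positivity
    have hJ : J (n+1) = -(2*(n:ℝ)+2) * J n / (2*(n:ℝ)+3) := by
      field_simp at hrec ⊢; linarith
    rw [hJ, ih]
    have hf1 : ((2*(n+1)+1).factorial : ℝ) = (2*(n:ℝ)+3) * (2*(n:ℝ)+2) * ((2*n+1).factorial : ℝ) := by
      have : 2*(n+1)+1 = (2*n+1) + 1 + 1 := by omega
      rw [this, Nat.factorial_succ, Nat.factorial_succ]; push_cast; ring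
    have hf2 : (((n+1).factorial : ℝ)) = ((n:ℝ)+1) * (n.factorial : ℝ) := by
      rw [Nat.factorial_succ]; push_cast; ring
    rw [hf1, hf2]
    have hpos : ((2*n+1).factorial : ℝ) ≠ 0 := by positivity
    have h2 : (2*(n:ℝ)+2) ≠ 0 := by positivity
    field_simp
    ring

lemma N_eq (n : ℕ) : I (R n * R n) = 2^(2*n+1) * ((n.factorial:ℝ))^2 / (2*(n:ℝ)+1) := by
  rw [norm_R, J_closed]
  have h1 : ((2*n+1).factorial : ℝ) = (2*(n:ℝ)+1) * ((2*n).factorial : ℝ) := by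
    rw [Nat.factorial_succ]; push_cast; ring
  have h2 : ((2*n).factorial : ℝ) ≠ 0 := by positivity
  have h3 : (2*(n:ℝ)+1) ≠ 0 := by positivity
  have hsq : ((-1:ℝ)^n) * ((-1:ℝ)^n) = 1 := by
    rw [← pow_add]; exact Even.neg_one_pow ⟨n, rfl⟩
  rw [h1]
  calc (-1:ℝ)^n * ((2*n).factorial : ℝ) *
        ((-1:ℝ)^n * 2^(2*n+1) * (n.factorial:ℝ)^2 / ((2*(n:ℝ)+1) * ((2*n).factorial:ℝ)))
      = ((-1:ℝ)^n * (-1:ℝ)^n) * (((2*n).factorial : ℝ) * (2^(2*n+1) * (n.factorial:ℝ)^2)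
          / ((2*(n:ℝ)+1) * ((2*n).factorial:ℝ))) := by ring
    _ = 2^(2*n+1) * ((n.factorial:ℝ))^2 / (2*(n:ℝ)+1) := by
        rw [hsq, one_mul]; field_simp

lemma N_pos (n : ℕ) : 0 < I (R n * R n) := by
  rw [N_eq]; positivity

lemma key_ratio (n : ℕ) : ((R n).eval 1)^2 = I (R n * R n) * ((2*(n:ℝ)+1)/2) := by
  rw [eval_one_R, N_eq]
  have h3 : (2*(n:ℝ)+1) ≠ 0 := by positivity
  field_simp
  ring

lemma exists_rep : ∀ (k : ℕ) (p : Polynomial ℝ), p.natDegree ≤ k →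
    ∃ a : ℕ → ℝ, p = ∑ n ∈ Finset.range (k+1), C (a n) * R n := by
  intro k
  induction k with
  | zero =>
    intro p hp
    refine ⟨fun _ => p.coeff 0, ?_⟩
    have hR0 : R 0 = 1 := by simp [R, f]
    rw [Polynomial.eq_C_of_natDegree_le_zero hp]
    simp [hR0]
  | succ k ih =>
    intro p hp
    set c := p.coeff (k+1) / (R (k+1)).coeff (k+1) with hc
    set q := p - C c * R (k+1) with hq
    have hqdeg : q.natDegree ≤ k := by
      rw [natDegree_le_iff_coeff_eq_zero]
      intro m hm
      rcases eq_or_lt_of_le (Nat.succ_le_of_lt hm) with heq | hlt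
      · rw [hq]
        simp only [coeff_sub, coeff_C_mul]
        rw [← heq, hc]
        rw [div_mul_cancel₀ _ (coeff_R_ne (k+1)), sub_self]
      · rw [hq]
        simp only [coeff_sub, coeff_C_mul]
        rw [coeff_eq_zero_of_natDegree_lt (lt_of_le_of_lt hp hlt),
          coeff_eq_zero_of_natDegree_lt (lt_of_le_of_lt (natDegree_R (k+1)) hlt)]
        ring
    obtain ⟨a, ha⟩ := ih q hqdeg
    refine ⟨Function.update a (k+1) c, ?_⟩
    rw [Finset.sum_range_succ, Function.update_self]
    have : ∑ n ∈ Finset.range (k+1), C (Function.update a (k+1) c n) * R n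
        = ∑ n ∈ Finset.range (k+1), C (a n) * R n :=
      Finset.sum_congr rfl fun n hn => by
        rw [Function.update_of_ne (by simp at hn; omega)]
    rw [this, ← ha, hq]
    ring

lemma I_sum {s : Finset ℕ} (g : ℕ → Polynomial ℝ) : I (∑ i ∈ s, g i) = ∑ i ∈ s, I (g i) := by
  classical
  induction s using Finset.induction with
  | empty => simpa using I_zero
  | @insert i s hni ih =>
    rw [Finset.sum_insert hni, Finset.sum_insert hni, I_add, ih]

lemma sum_odd (k : ℕ) : ∑ n ∈ Finset.range (k+1), (2*(n:ℝ)+1)/2 = ((k:ℝ)+1)^2/2 := by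
  induction k with
  | zero => norm_num
  | succ k ih => rw [Finset.sum_range_succ, ih]; push_cast; ring

end TraceIneq1D

open TraceIneq1D Polynomial in
/-- One-dimensional discrete trace inequality on `[-1,1]`: any polynomial `p`
of degree at most `k` satisfies `p(1)² ≤ ((k+1)²/2) ∫_{-1}^{1} p(x)² dx`. -/
theorem trace_inequality_1d (k : ℕ) (p : Polynomial ℝ) (hdeg : p.natDegree ≤ k) :
    (p.eval 1) ^ 2 ≤ (((k : ℝ) + 1) ^ 2 / 2) * ∫ x in (-1:ℝ)..1, (p.eval x) ^ 2 := by
  obtain ⟨a, ha⟩ := exists_rep k p hdeg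
  have hint : (∫ x in (-1:ℝ)..1, (p.eval x) ^ 2) = I (p * p) := by
    simp only [I, eval_mul, sq]
  have hterm : ∀ n m : ℕ, I ((C (a n) * R n) * (C (a m) * R m)) = a n * a m * I (R n * R m) := by
    intro n m
    have h : (C (a n) * R n) * (C (a m) * R m) = C (a n) * (C (a m) * (R n * R m)) := by ring
    rw [h, I_C_mul, I_C_mul]; ring
  have hIpp : I (p * p) = ∑ n ∈ Finset.range (k+1), (a n)^2 * I (R n * R n) := by
    rw [ha, Finset.sum_mul_sum, I_sum]
    refine Finset.sum_congr rfl fun n hn => ?_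
    rw [I_sum]
    rw [Finset.sum_eq_single n
      (fun m _ hmn => by rw [hterm, orth (Ne.symm hmn), mul_zero])
      (fun hn' => absurd hn hn'), hterm]
    ring
  have heval : p.eval 1 = ∑ n ∈ Finset.range (k+1), a n * (R n).eval 1 := by
    rw [ha]; simp [eval_finset_sum]
  have hCS := Finset.sum_sq_le_sum_mul_sum_of_sq_eq_mul (Finset.range (k+1))
    (r := fun n => a n * (R n).eval 1)
    (f := fun n => (a n)^2 * I (R n * R n))
    (g := fun n => (2*(n:ℝ)+1)/2)
    (fun n _ => mul_nonneg (sq_nonneg _) (N_pos n).le)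
    (fun n _ => by positivity)
    (fun n _ => by rw [mul_pow, key_ratio]; ring)
  rw [hint, hIpp, ← heval] at *
  rw [sum_odd] at hCS
  calc (p.eval 1)^2 ≤ _ := hCS
    _ = _ := by ring
end
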